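/- arXiv:1509.08562 — 2 statements merged into one kernel-verified Lean document; each statement's English description precedes it below -/
import Mathlib

section
/- Let C₁, C₂ be channels from finite sets X₁, X₂ to finite trace sets Y₁, Y₂ respectively, and let Obs be any observer on Int(Y₁,Y₂). Then there exists a scheduler S* on Y₁, Y₂ that minimises the observed min-capacity of the scheduled composition: for every scheduler S on Y₁, Y₂, MC(Comp_{S*}(C₁,C₂)·Obs) ≤ MC(Comp_S(C₁,C₂)·Obs), where MC is the supremum of the min-entropy leakage over all priors on X₁×X₂. -/
open scoped Classical BigOperators

noncomputable section

/-- A (row-stochastic) channel matrix whose outputs range over a finite set `Ys`. -/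
def FIsChannel {X B : Type*} (Ys : Finset B) (C : X → B → ℝ) : Prop :=
  (∀ x y, 0 ≤ C x y) ∧ ∀ x, ∑ y ∈ Ys, C x y = 1

/-- A prior (probability distribution). -/
def IsPrior {X : Type*} [Fintype X] (π : X → ℝ) : Prop :=
  (∀ x, 0 ≤ π x) ∧ ∑ x, π x = 1

/-- Cascade composition of channels (matrix product), outputs of the first ranging
over the finite set `Ys`. -/
def Fcascade {X B Z : Type*} (Ys : Finset B) (C : X → B → ℝ) (D : B → Z → ℝ) :
    X → Z → ℝ :=
  fun x z => ∑ y ∈ Ys, C x y * D y z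

/-- Mutual information (base-2), with `0`-probability terms taken to be `0`. -/
def FMI {X B : Type*} [Fintype X] (π : X → ℝ) (Ys : Finset B) (C : X → B → ℝ) : ℝ :=
  ∑ x, ∑ y ∈ Ys, if π x * C x y = 0 then 0
    else π x * C x y * Real.logb 2 (C x y / ∑ x', π x' * C x' y)

/-- Prior vulnerability. -/
def Vprior {X : Type*} [Fintype X] [Nonempty X] (π : X → ℝ) : ℝ :=
  Finset.univ.sup' Finset.univ_nonempty π

/-- Posterior vulnerability. -/
def FVpost {X B : Type*} [Fintype X] [Nonempty X]
    (π : X → ℝ) (Ys : Finset B) (C : X → B → ℝ) : ℝ :=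
  ∑ y ∈ Ys, Finset.univ.sup' Finset.univ_nonempty (fun x => π x * C x y)

/-- Min-entropy leakage. -/
def FMEL {X B : Type*} [Fintype X] [Nonempty X]
    (π : X → ℝ) (Ys : Finset B) (C : X → B → ℝ) : ℝ :=
  Real.logb 2 (FVpost π Ys C) - Real.logb 2 (Vprior π)

/-- Min-capacity: supremum of min-entropy leakage over all priors. -/
def FMinCap {X B : Type*} [Fintype X] [Nonempty X] (Ys : Finset B) (C : X → B → ℝ) : ℝ :=
  sSup {l : ℝ | ∃ π : X → ℝ, IsPrior π ∧ l = FMEL π Ys C}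

/-- All interleavings (shuffles) of two traces. -/
def interleavings {A : Type*} : List A → List A → List (List A)
  | [], ys => [ys]
  | x :: xs, [] => [x :: xs]
  | x :: xs, y :: ys =>
      ((interleavings xs (y :: ys)).map (x :: ·)) ++
        ((interleavings (x :: xs) ys).map (y :: ·))
termination_by l₁ l₂ => l₁.length + l₂.length

/-- The interleaving `Int(y₁, y₂)` of two traces, as a finite set. -/
def IntF {A : Type*} [DecidableEq A] (y₁ y₂ : List A) : Finset (List A) :=
  (interleavings y₁ y₂).toFinset

/-- The interleaving `Int(Y₁, Y₂)` of two finite sets of traces. -/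
def IntSet {A : Type*} [DecidableEq A] (Y₁ Y₂ : Finset (List A)) : Finset (List A) :=
  Y₁.biUnion fun y₁ => Y₂.biUnion fun y₂ => IntF y₁ y₂

/-- A scheduler on `Y₁`, `Y₂`: for each pair of traces it yields a probability
distribution supported on their interleavings. -/
def IsScheduler {A : Type*} [DecidableEq A] (Y₁ Y₂ : Finset (List A))
    (S : List A → List A → List A → ℝ) : Prop :=
  ∀ y₁ ∈ Y₁, ∀ y₂ ∈ Y₂,
    (∀ y, 0 ≤ S y₁ y₂ y) ∧ (∀ y, y ∉ IntF y₁ y₂ → S y₁ y₂ y = 0) ∧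
      ∑ y ∈ IntF y₁ y₂, S y₁ y₂ y = 1

/-- The scheduled composition of two channels with respect to a scheduler. -/
def Comp {A X₁ X₂ : Type*} (Y₁ Y₂ : Finset (List A))
    (C₁ : X₁ → List A → ℝ) (C₂ : X₂ → List A → ℝ)
    (S : List A → List A → List A → ℝ) : X₁ × X₂ → List A → ℝ :=
  fun x y => ∑ y₁ ∈ Y₁, ∑ y₂ ∈ Y₂, C₁ x.1 y₁ * C₂ x.2 y₂ * S y₁ y₂ y

/-- The (disjoint) parallel composition of two channels. -/
def Par {A X₁ X₂ : Type*} (C₁ : X₁ → List A → ℝ) (C₂ : X₂ → List A → ℝ) :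
    X₁ × X₂ → List A × List A → ℝ :=
  fun x y => C₁ x.1 y.1 * C₂ x.2 y.2


section Aux

variable {A : Type*} [DecidableEq A]

lemma append_mem_interleavings : ∀ (l₁ l₂ : List A), l₁ ++ l₂ ∈ interleavings l₁ l₂
  | [], ys => by simp [interleavings]
  | x :: xs, [] => by simp [interleavings]
  | x :: xs, y :: ys => by
      have h := append_mem_interleavings xs (y :: ys)
      simp only [interleavings, List.mem_append, List.mem_map, List.cons_append]
      exact Or.inl ⟨xs ++ y :: ys, h, rfl⟩
termination_by l₁ l₂ => l₁.length + l₂.length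

lemma append_mem_IntF (l₁ l₂ : List A) : l₁ ++ l₂ ∈ IntF l₁ l₂ := by
  simpa [IntF, List.mem_toFinset] using append_mem_interleavings l₁ l₂

/-- the default scheduler: always concatenate -/
def Dflt : List A → List A → List A → ℝ := fun y₁ y₂ y => if y = y₁ ++ y₂ then 1 else 0

/-- scheduler condition at every pair of traces -/
def SchedAll (S : List A → List A → List A → ℝ) : Prop :=
  ∀ y₁ y₂, (∀ y, 0 ≤ S y₁ y₂ y) ∧ (∀ y, y ∉ IntF y₁ y₂ → S y₁ y₂ y = 0) ∧
    ∑ y ∈ IntF y₁ y₂, S y₁ y₂ y = 1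

lemma schedAll_dflt : SchedAll (Dflt (A := A)) := by
  intro y₁ y₂
  refine ⟨fun y => ?_, fun y hy => ?_, ?_⟩
  · unfold Dflt; split <;> norm_num
  · unfold Dflt
    rw [if_neg]
    intro h
    exact hy (h ▸ append_mem_IntF y₁ y₂)
  · unfold Dflt
    rw [Finset.sum_ite_eq' (IntF y₁ y₂) (y₁ ++ y₂) (fun _ => (1 : ℝ)),
      if_pos (append_mem_IntF y₁ y₂)]

lemma schedAll_isScheduler {Y₁ Y₂ : Finset (List A)} {S : List A → List A → List A → ℝ}
    (h : SchedAll S) : IsScheduler Y₁ Y₂ S := fun y₁ _ y₂ _ => h y₁ y₂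

lemma IntF_subset_IntSet {Y₁ Y₂ : Finset (List A)} {y₁ y₂ : List A}
    (h₁ : y₁ ∈ Y₁) (h₂ : y₂ ∈ Y₂) : IntF y₁ y₂ ⊆ IntSet Y₁ Y₂ := by
  intro y hy
  exact Finset.mem_biUnion.2 ⟨y₁, h₁, Finset.mem_biUnion.2 ⟨y₂, h₂, hy⟩⟩

/-- min-capacity of a channel equals `logb 2` of the sum of columnwise maxima. -/
lemma FMinCap_eq_logb {X B : Type*} [Fintype X] [Nonempty X] (Zs : Finset B)
    (C : X → B → ℝ) (hC : FIsChannel Zs C) :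
    FMinCap Zs C =
      Real.logb 2 (∑ z ∈ Zs, Finset.univ.sup' Finset.univ_nonempty (fun x => C x z)) := by
  set M : ℝ := ∑ z ∈ Zs, Finset.univ.sup' Finset.univ_nonempty (fun x => C x z) with hMdef
  obtain ⟨x0⟩ := (inferInstance : Nonempty X)
  have hM1 : 1 ≤ M := by
    calc (1 : ℝ) = ∑ z ∈ Zs, C x0 z := (hC.2 x0).symm
    _ ≤ M := Finset.sum_le_sum fun z _ => Finset.le_sup' (fun x => C x z) (Finset.mem_univ x0)
  have hMpos : (0 : ℝ) < M := lt_of_lt_of_le one_pos hM1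
  -- upper bound for every prior
  have claim1 : ∀ π : X → ℝ, IsPrior π → FMEL π Zs C ≤ Real.logb 2 M := by
    intro π hπ
    have hVle : ∀ x, π x ≤ Vprior π := fun x => Finset.le_sup' _ (Finset.mem_univ x)
    have hVpos : 0 < Vprior π := by
      obtain ⟨x, hx⟩ : ∃ x, 0 < π x := by
        by_contra h
        push_neg at h
        have h0 : ∀ x, π x = 0 := fun x => le_antisymm (h x) (hπ.1 x)
        have : (1 : ℝ) = 0 := by rw [← hπ.2, Finset.sum_congr rfl fun x _ => h0 x]; simp
        norm_num at this
      exact lt_of_lt_of_le hx (hVle x)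
    obtain ⟨xs, -, hxs⟩ := Finset.exists_mem_eq_sup' (Finset.univ_nonempty (α := X)) π
    have hpost_lb : Vprior π ≤ FVpost π Zs C := by
      calc Vprior π = π xs := hxs
      _ = ∑ z ∈ Zs, π xs * C xs z := by rw [← Finset.mul_sum, hC.2 xs, mul_one]
      _ ≤ FVpost π Zs C :=
        Finset.sum_le_sum fun z _ =>
          Finset.le_sup' (fun x => π x * C x z) (Finset.mem_univ xs)
    have hpost_pos : 0 < FVpost π Zs C := lt_of_lt_of_le hVpos hpost_lb
    have hpost_ub : FVpost π Zs C ≤ Vprior π * M := by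
      unfold FVpost
      rw [hMdef, Finset.mul_sum]
      refine Finset.sum_le_sum fun z _ => ?_
      refine Finset.sup'_le _ _ fun x _ => ?_
      exact mul_le_mul (hVle x) (Finset.le_sup' (fun x => C x z) (Finset.mem_univ x)) (hC.1 x z) hVpos.le
    have h1 : Real.logb 2 (FVpost π Zs C) ≤ Real.logb 2 (Vprior π) + Real.logb 2 M := by
      rw [← Real.logb_mul hVpos.ne' hMpos.ne']
      exact Real.logb_le_logb_of_le one_lt_two hpost_pos hpost_ub
    unfold FMEL
    linarith
  -- uniform prior attains it
  set n : ℝ := (Fintype.card X : ℝ) with hn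
  have hnpos : 0 < n := by
    rw [hn]
    exact_mod_cast Fintype.card_pos
  set πu : X → ℝ := fun _ => n⁻¹ with hπu
  have hprior : IsPrior πu := by
    constructor
    · intro x; positivity
    · simp only [hπu, Finset.sum_const, Finset.card_univ, nsmul_eq_mul, ← hn]
      exact mul_inv_cancel₀ hnpos.ne'
  have hVu : Vprior πu = n⁻¹ := Finset.sup'_const _ _
  have hVpu : FVpost πu Zs C = n⁻¹ * M := by
    unfold FVpost
    rw [hMdef, Finset.mul_sum]
    refine Finset.sum_congr rfl fun z _ => ?_
    have h := Finset.comp_sup'_eq_sup'_comp (Finset.univ_nonempty (α := X))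
      (f := fun x => C x z) (fun r => n⁻¹ * r)
      (fun a b => mul_max_of_nonneg a b (by positivity))
    simp only [Function.comp_def] at h
    exact h.symm
  have hmel : FMEL πu Zs C = Real.logb 2 M := by
    unfold FMEL
    rw [hVu, hVpu, Real.logb_mul (by positivity) hMpos.ne']
    ring
  unfold FMinCap
  apply le_antisymm
  · refine csSup_le ⟨_, πu, hprior, rfl⟩ ?_
    rintro l ⟨π, hπ, rfl⟩
    exact claim1 π hπ
  · refine le_csSup ⟨Real.logb 2 M, ?_⟩ ⟨πu, hprior, hmel.symm⟩
    rintro l ⟨π, hπ, rfl⟩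
    exact claim1 π hπ

end Aux

/-- there exists a scheduler minimising the observed min-capacity
of the scheduled composition, in the presence of any observer. -/
theorem exists_scheduler_minimising_observed_minCap
    {A X₁ X₂ Z : Type*} [DecidableEq A] [Fintype X₁] [Fintype X₂]
    [Nonempty X₁] [Nonempty X₂] [Fintype Z]
    (Y₁ Y₂ : Finset (List A))
    (C₁ : X₁ → List A → ℝ) (C₂ : X₂ → List A → ℝ)
    (hC₁ : FIsChannel Y₁ C₁) (hC₂ : FIsChannel Y₂ C₂)
    (Obs : List A → Z → ℝ)
    (hObs : (∀ y z, 0 ≤ Obs y z) ∧ ∀ y ∈ IntSet Y₁ Y₂, ∑ z, Obs y z = 1) :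
    ∃ Sstar, IsScheduler Y₁ Y₂ Sstar ∧
      ∀ S, IsScheduler Y₁ Y₂ S →
        FMinCap (Finset.univ : Finset Z)
            (Fcascade (IntSet Y₁ Y₂) (Comp Y₁ Y₂ C₁ C₂ Sstar) Obs) ≤
          FMinCap (Finset.univ : Finset Z)
            (Fcascade (IntSet Y₁ Y₂) (Comp Y₁ Y₂ C₁ C₂ S) Obs) := by
  classical
  obtain ⟨hObs0, hObs1⟩ := hObs
  have hev : ∀ (y₁ y₂ y : List A),
      Continuous fun S : List A → List A → List A → ℝ => S y₁ y₂ y :=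
    fun y₁ y₂ y =>
      (continuous_apply y).comp ((continuous_apply y₂).comp (continuous_apply y₁))
  set Cas : (List A → List A → List A → ℝ) → (X₁ × X₂) → Z → ℝ :=
    fun S => Fcascade (IntSet Y₁ Y₂) (Comp Y₁ Y₂ C₁ C₂ S) Obs with hCas
  set G : (List A → List A → List A → ℝ) → ℝ :=
    fun S => ∑ z, Finset.univ.sup' Finset.univ_nonempty
      (fun x : X₁ × X₂ => Cas S x z) with hGdef
  have hchan : ∀ S, IsScheduler Y₁ Y₂ S →
      FIsChannel (Finset.univ : Finset Z) (Cas S) := by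
    intro S hS
    constructor
    · intro x z
      refine Finset.sum_nonneg fun y hy => mul_nonneg ?_ (hObs0 y z)
      refine Finset.sum_nonneg fun y₁ h₁ => Finset.sum_nonneg fun y₂ h₂ => ?_
      exact mul_nonneg (mul_nonneg (hC₁.1 _ _) (hC₂.1 _ _)) ((hS y₁ h₁ y₂ h₂).1 y)
    · intro x
      have h1 : ∀ y ∈ IntSet Y₁ Y₂, ∑ z, Comp Y₁ Y₂ C₁ C₂ S x y * Obs y z
          = Comp Y₁ Y₂ C₁ C₂ S x y := fun y hy => by
        rw [← Finset.mul_sum, hObs1 y hy, mul_one]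
      have h2 : ∑ z, Cas S x z = ∑ y ∈ IntSet Y₁ Y₂, Comp Y₁ Y₂ C₁ C₂ S x y := by
        rw [hCas]
        unfold Fcascade
        rw [Finset.sum_comm]
        exact Finset.sum_congr rfl h1
      rw [h2]
      unfold Comp
      calc ∑ y ∈ IntSet Y₁ Y₂, ∑ y₁ ∈ Y₁, ∑ y₂ ∈ Y₂,
            C₁ x.1 y₁ * C₂ x.2 y₂ * S y₁ y₂ y
          = ∑ y₁ ∈ Y₁, ∑ y₂ ∈ Y₂, ∑ y ∈ IntSet Y₁ Y₂,
            C₁ x.1 y₁ * C₂ x.2 y₂ * S y₁ y₂ y := by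
            rw [Finset.sum_comm]
            exact Finset.sum_congr rfl fun y₁ _ => Finset.sum_comm
        _ = ∑ y₁ ∈ Y₁, ∑ y₂ ∈ Y₂, C₁ x.1 y₁ * C₂ x.2 y₂ := by
            refine Finset.sum_congr rfl fun y₁ h₁ => Finset.sum_congr rfl fun y₂ h₂ => ?_
            rw [← Finset.mul_sum,
              ← Finset.sum_subset (IntF_subset_IntSet h₁ h₂)
                (fun y _ hy => (hS y₁ h₁ y₂ h₂).2.1 y hy),
              (hS y₁ h₁ y₂ h₂).2.2, mul_one]
        _ = ∑ y₁ ∈ Y₁, C₁ x.1 y₁ * ∑ y₂ ∈ Y₂, C₂ x.2 y₂ :=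
            Finset.sum_congr rfl fun y₁ _ => (Finset.mul_sum _ _ _).symm
        _ = 1 := by
            rw [hC₂.2 x.2]
            simp only [mul_one]
            exact hC₁.2 x.1
  have hG1 : ∀ S, IsScheduler Y₁ Y₂ S → 1 ≤ G S := by
    intro S hS
    obtain ⟨x0⟩ := (inferInstance : Nonempty (X₁ × X₂))
    calc (1:ℝ) = ∑ z, Cas S x0 z := ((hchan S hS).2 x0).symm
      _ ≤ G S := Finset.sum_le_sum fun z _ =>
        Finset.le_sup' (fun x => Cas S x z) (Finset.mem_univ x0)
  have hGcont : Continuous G := by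
    rw [hGdef]
    refine continuous_finset_sum _ fun z _ => ?_
    refine Continuous.finset_sup'_apply Finset.univ_nonempty fun x _ => ?_
    simp only [hCas]
    unfold Fcascade Comp
    refine continuous_finset_sum _ fun y _ => Continuous.mul ?_ continuous_const
    refine continuous_finset_sum _ fun y₁ _ => continuous_finset_sum _ fun y₂ _ => ?_
    exact continuous_const.mul (hev y₁ y₂ y)
  set 𝒮 : Set (List A → List A → List A → ℝ) := {S | SchedAll S} with h𝒮
  have h𝒮ne : 𝒮.Nonempty := ⟨Dflt, schedAll_dflt⟩
  set T : Set (List A → List A → List A → ℝ) :=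
    Set.pi Set.univ fun _ => Set.pi Set.univ fun _ =>
      Set.pi Set.univ fun _ => Set.Icc (0:ℝ) 1 with hT
  have hsub : 𝒮 ⊆ T := by
    intro S hS y₁ _ y₂ _ y _
    obtain ⟨h0, hz, hsum⟩ := hS y₁ y₂
    refine ⟨h0 y, ?_⟩
    by_cases hy : y ∈ IntF y₁ y₂
    · calc S y₁ y₂ y ≤ ∑ y' ∈ IntF y₁ y₂, S y₁ y₂ y' :=
        Finset.single_le_sum (fun y' _ => h0 y') hy
      _ = 1 := hsum
    · rw [hz y hy]; norm_num
  have hTcomp : IsCompact T := isCompact_univ_pi fun _ =>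
    isCompact_univ_pi fun _ => isCompact_univ_pi fun _ => isCompact_Icc
  have hclosed : IsClosed 𝒮 := by
    have heq : 𝒮 = ⋂ y₁, ⋂ y₂,
        ((⋂ y, {S : List A → List A → List A → ℝ | 0 ≤ S y₁ y₂ y}) ∩
         (⋂ y, {S : List A → List A → List A → ℝ |
            y ∈ IntF y₁ y₂ ∨ S y₁ y₂ y = 0}) ∩
         {S : List A → List A → List A → ℝ |
            ∑ y ∈ IntF y₁ y₂, S y₁ y₂ y = 1}) := by
      ext S
      simp only [h𝒮, Set.mem_setOf_eq, SchedAll, Set.mem_iInter, Set.mem_inter_iff]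
      constructor
      · intro h y₁ y₂
        obtain ⟨a, b, c⟩ := h y₁ y₂
        exact ⟨⟨fun y => a y, fun y => or_iff_not_imp_left.mpr (b y)⟩, c⟩
      · intro h y₁ y₂
        obtain ⟨⟨a, b⟩, c⟩ := h y₁ y₂
        exact ⟨a, fun y hy => (b y).resolve_left hy, c⟩
    rw [heq]
    refine isClosed_iInter fun y₁ => isClosed_iInter fun y₂ =>
      IsClosed.inter (IsClosed.inter ?_ ?_) ?_
    · exact isClosed_iInter fun y => isClosed_le continuous_const (hev y₁ y₂ y)
    · refine isClosed_iInter fun y => ?_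
      by_cases hy : y ∈ IntF y₁ y₂
      · simp only [hy, true_or, Set.setOf_true]
        exact isClosed_univ
      · simp only [hy, false_or]
        exact isClosed_eq (hev y₁ y₂ y) continuous_const
    · exact isClosed_eq (continuous_finset_sum _ fun y _ => hev y₁ y₂ y) continuous_const
  have h𝒮comp : IsCompact 𝒮 := by
    rw [(Set.inter_eq_self_of_subset_right hsub).symm]
    exact hTcomp.inter_right hclosed
  obtain ⟨Sstar, hSmem, hminOn⟩ := h𝒮comp.exists_isMinOn h𝒮ne hGcont.continuousOn
  have hSstar : IsScheduler Y₁ Y₂ Sstar := schedAll_isScheduler hSmem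
  refine ⟨Sstar, hSstar, ?_⟩
  intro S hS
  set S' : List A → List A → List A → ℝ :=
    fun y₁ y₂ => if y₁ ∈ Y₁ ∧ y₂ ∈ Y₂ then S y₁ y₂ else Dflt y₁ y₂ with hS'
  have hS'mem : S' ∈ 𝒮 := by
    intro y₁ y₂
    have hrw : S' y₁ y₂ = if y₁ ∈ Y₁ ∧ y₂ ∈ Y₂ then S y₁ y₂ else Dflt y₁ y₂ := rfl
    by_cases h : y₁ ∈ Y₁ ∧ y₂ ∈ Y₂
    · rw [hrw, if_pos h]
      exact hS y₁ h.1 y₂ h.2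
    · rw [hrw, if_neg h]
      exact schedAll_dflt y₁ y₂
  have hCompEq : Comp Y₁ Y₂ C₁ C₂ S' = Comp Y₁ Y₂ C₁ C₂ S := by
    funext x y
    unfold Comp
    refine Finset.sum_congr rfl fun y₁ h₁ => Finset.sum_congr rfl fun y₂ h₂ => ?_
    have hss : S' y₁ y₂ = S y₁ y₂ := by
      simp only [hS']
      exact if_pos ⟨h₁, h₂⟩
    rw [hss]
  have hCasEq : Cas S' = Cas S := by
    simp only [hCas]
    rw [hCompEq]
  have key : G Sstar ≤ G S := by
    calc G Sstar ≤ G S' := hminOn hS'mem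
      _ = G S := by simp only [hGdef, hCasEq]
  have e1 := FMinCap_eq_logb (Finset.univ : Finset Z) (Cas Sstar) (hchan _ hSstar)
  have e2 := FMinCap_eq_logb (Finset.univ : Finset Z) (Cas S) (hchan _ hS)
  rw [e1, e2]
  refine Real.logb_le_logb_of_le one_lt_two ?_ key
  exact lt_of_lt_of_le one_pos (hG1 Sstar hSstar)
end
end

section
/- Let C₁ be a channel from a finite set X₁ to a finite set Y₁ of traces, C₂ a channel from a finite set X₂ to a finite set Y₂ of traces, and S a scheduler on Y₁, Y₂. Then the scheduled composition Comp_S(C₁,C₂) is itself a channel: all its entries are nonnegative and each of its rows sums to 1, i.e. for every (x₁,x₂) ∈ X₁×X₂, Σ_{y ∈ Int(Y₁,Y₂)} Comp_S(C₁,C₂)[(x₁,x₂), y] = 1. -/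
open scoped Classical BigOperators

noncomputable section

/-- the scheduled composition of two channels is itself a channel:
entries are nonnegative and each row sums to `1` over `Int(Y₁, Y₂)`. -/
theorem scheduled_composition_isChannel
    {A X₁ X₂ : Type*} [DecidableEq A]
    (Y₁ Y₂ : Finset (List A))
    (C₁ : X₁ → List A → ℝ) (C₂ : X₂ → List A → ℝ)
    (hC₁ : FIsChannel Y₁ C₁) (hC₂ : FIsChannel Y₂ C₂)
    (S : List A → List A → List A → ℝ) (hS : IsScheduler Y₁ Y₂ S) :
    (∀ x y, 0 ≤ Comp Y₁ Y₂ C₁ C₂ S x y) ∧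
      ∀ x : X₁ × X₂, ∑ y ∈ IntSet Y₁ Y₂, Comp Y₁ Y₂ C₁ C₂ S x y = 1 := by
  obtain ⟨h1nn, h1sum⟩ := hC₁
  obtain ⟨h2nn, h2sum⟩ := hC₂
  constructor
  · intro x y
    apply Finset.sum_nonneg
    intro y₁ hy₁
    apply Finset.sum_nonneg
    intro y₂ hy₂
    exact mul_nonneg (mul_nonneg (h1nn _ _) (h2nn _ _)) ((hS y₁ hy₁ y₂ hy₂).1 y)
  · intro x
    unfold Comp
    rw [Finset.sum_comm]
    have : ∀ y₁ ∈ Y₁, ∑ y₂ ∈ Y₂, ∑ y ∈ IntSet Y₁ Y₂,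
        C₁ x.1 y₁ * C₂ x.2 y₂ * S y₁ y₂ y = C₁ x.1 y₁ := by
      intro y₁ hy₁
      have : ∀ y₂ ∈ Y₂, ∑ y ∈ IntSet Y₁ Y₂, C₁ x.1 y₁ * C₂ x.2 y₂ * S y₁ y₂ y
          = C₁ x.1 y₁ * C₂ x.2 y₂ := by
        intro y₂ hy₂
        obtain ⟨_, hzero, hsum⟩ := hS y₁ hy₁ y₂ hy₂
        rw [← Finset.mul_sum]
        have hsub : IntF y₁ y₂ ⊆ IntSet Y₁ Y₂ := by
          intro y hy
          exact Finset.mem_biUnion.2 ⟨y₁, hy₁, Finset.mem_biUnion.2 ⟨y₂, hy₂, hy⟩⟩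
        rw [← Finset.sum_subset hsub (fun y _ hy => hzero y hy), hsum, mul_one]
      rw [Finset.sum_congr rfl this, ← Finset.mul_sum, h2sum, mul_one]
    calc ∑ y₁ ∈ Y₁, ∑ y ∈ IntSet Y₁ Y₂, ∑ y₂ ∈ Y₂,
            C₁ x.1 y₁ * C₂ x.2 y₂ * S y₁ y₂ y
        = ∑ y₁ ∈ Y₁, ∑ y₂ ∈ Y₂, ∑ y ∈ IntSet Y₁ Y₂,
            C₁ x.1 y₁ * C₂ x.2 y₂ * S y₁ y₂ y :=
          Finset.sum_congr rfl (fun y₁ _ => Finset.sum_comm)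
      _ = ∑ y₁ ∈ Y₁, C₁ x.1 y₁ := Finset.sum_congr rfl this
      _ = 1 := h1sum x.1
end
end
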